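/- For all n ∈ ℤ and τ in the upper half plane, the Jacobi theta identity θ₂(τ)⁴ + θ₄(τ)⁴ = θ₃(τ)⁴ holds, where θ₂(τ) = Σ_{n∈ℤ} q^{(n+1/2)²/2}, θ₃(τ) = Σ_{n∈ℤ} q^{n²/2}, θ₄(τ) = Σ_{n∈ℤ} (-1)ⁿ q^{n²/2} with q = e^{2πiτ}. -/

import Mathlib

open Complex

/-- Jacobi theta constant θ₂. -/
noncomputable def theta2 (τ : ℂ) : ℂ :=
  ∑' n : ℤ, Complex.exp (Real.pi * Complex.I * τ * ((n : ℂ) + 1/2) ^ 2)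

/-- Jacobi theta constant θ₃. -/
noncomputable def theta3 (τ : ℂ) : ℂ :=
  ∑' n : ℤ, Complex.exp (Real.pi * Complex.I * τ * (n : ℂ) ^ 2)

/-- Jacobi theta constant θ₄. -/
noncomputable def theta4 (τ : ℂ) : ℂ :=
  ∑' n : ℤ, (-1 : ℂ) ^ n * Complex.exp (Real.pi * Complex.I * τ * (n : ℂ) ^ 2)

/-!
Split ℤ² into the two colour classes of the checkerboard, `a + b` even and `a + b` odd, and
parametrise them by `(a, b) = (j + k, j - k)` and `(a, b) = (j + k + 1, j - k)`. By the
parallelogram law `x² + y² = 2((x + y)/2)² + 2((x - y)/2)²`, each product of two theta series at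
`τ` becomes a sum of products of theta series at `2τ`, giving the duplication formulas
`θ₃(τ)² = θ₃(2τ)² + θ₂(2τ)²`, `θ₄(τ)² = θ₃(2τ)² - θ₂(2τ)²` and `θ₂(τ)² = 2 θ₂(2τ) θ₃(2τ)`.
Hence `θ₃(τ)⁴ - θ₄(τ)⁴ = 4 θ₃(2τ)² θ₂(2τ)² = θ₂(τ)⁴`.
-/

def checkerboardEquiv : (ℤ × ℤ) ⊕ (ℤ × ℤ) ≃ ℤ × ℤ where
  toFun := Sum.elim (fun p => (p.1 + p.2, p.1 - p.2)) (fun p => (p.1 + p.2 + 1, p.1 - p.2))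
  invFun a :=
    if Even (a.1 + a.2) then .inl ((a.1 + a.2) / 2, (a.1 - a.2) / 2)
    else .inr ((a.1 + a.2 - 1) / 2, (a.1 - a.2 - 1) / 2)
  left_inv := by
    rintro (⟨j, k⟩ | ⟨j, k⟩)
    · have h : Even (j + k + (j - k)) := ⟨j, by ring⟩
      simp only [Sum.elim_inl, h, if_true, Sum.inl.injEq, Prod.mk.injEq]
      omega
    · have h : ¬Even (j + k + 1 + (j - k)) := Int.not_even_iff_odd.2 ⟨j, by ring⟩
      simp only [Sum.elim_inr, h, if_false, Sum.inr.injEq, Prod.mk.injEq]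
      omega
  right_inv := by
    rintro ⟨a, b⟩
    by_cases h : Even (a + b)
    · simp only [h, if_true, Sum.elim_inl, Prod.mk.injEq]
      rw [Int.even_iff] at h
      omega
    · simp only [h, if_false, Sum.elim_inr, Prod.mk.injEq]
      rw [Int.not_even_iff] at h
      omega

theorem tsum_eq_tsum_checkerboard {E : Type*} [NormedAddCommGroup E] [CompleteSpace E]
    {u : ℤ × ℤ → E} (hu : Summable u) :
    ∑' a, u a = ∑' p : ℤ × ℤ, u (p.1 + p.2, p.1 - p.2)
      + ∑' p : ℤ × ℤ, u (p.1 + p.2 + 1, p.1 - p.2) := by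
  have hv : Summable (u ∘ checkerboardEquiv) := checkerboardEquiv.summable_iff.mpr hu
  rw [← checkerboardEquiv.tsum_eq]
  exact (hv.comp_injective Sum.inl_injective).tsum_sum (hv.comp_injective Sum.inr_injective)

theorem tsum_sq_eq_tsum_checkerboard {R : Type*} [NormedRing R] [CompleteSpace R] {F : ℤ → R}
    (hF : Summable (‖F ·‖)) :
    (∑' n, F n) ^ 2 = ∑' p : ℤ × ℤ, F (p.1 + p.2) * F (p.1 - p.2)
      + ∑' p : ℤ × ℤ, F (p.1 + p.2 + 1) * F (p.1 - p.2) := by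
  rw [sq, tsum_mul_tsum_of_summable_norm hF hF]
  exact tsum_eq_tsum_checkerboard (hF.mul_norm hF).of_norm

/-- `gauss τ x = q ^ (x² / 2)` with `q = e^{2πiτ}`. -/
noncomputable def gauss (τ x : ℂ) : ℂ := exp (Real.pi * I * τ * x ^ 2)

theorem gauss_mul_gauss (τ x y : ℂ) :
    gauss τ x * gauss τ y = gauss (2 * τ) ((x + y) / 2) * gauss (2 * τ) ((x - y) / 2) := by
  simp only [gauss, ← exp_add]
  ring_nf

theorem summable_norm_gauss_int_add (c : ℂ) {τ : ℂ} (hτ : 0 < τ.im) :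
    Summable fun n : ℤ => ‖gauss τ (n + c)‖ := by
  have h := summable_norm_iff.mpr ((summable_jacobiTheta₂_term_iff (c * τ) τ).mpr hτ)
  refine (h.mul_left ‖gauss τ c‖).congr fun n => ?_
  rw [← norm_mul, gauss, gauss, jacobiTheta₂_term, ← exp_add]
  ring_nf

theorem summable_norm_gauss_int {τ : ℂ} (hτ : 0 < τ.im) :
    Summable fun n : ℤ => ‖gauss τ n‖ := by
  simpa using summable_norm_gauss_int_add 0 hτ

theorem theta2_eq_tsum_gauss (τ : ℂ) : theta2 τ = ∑' n : ℤ, gauss τ (n + 1 / 2) := rfl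

theorem theta3_eq_tsum_gauss (τ : ℂ) : theta3 τ = ∑' n : ℤ, gauss τ n := rfl

theorem theta4_eq_tsum_gauss (τ : ℂ) : theta4 τ = ∑' n : ℤ, (-1) ^ n * gauss τ n := rfl

section Duplication

variable {τ : ℂ}

theorem theta3_sq (hτ : 0 < τ.im) :
    theta3 τ ^ 2 = theta3 (2 * τ) ^ 2 + theta2 (2 * τ) ^ 2 := by
  have h2τ : 0 < (2 * τ).im := by simpa using hτ
  have hθ₃ := summable_norm_gauss_int h2τ
  have hθ₂ := summable_norm_gauss_int_add (1 / 2) h2τ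
  have even (j k : ℤ) :
      gauss τ ↑(j + k) * gauss τ ↑(j - k) = gauss (2 * τ) j * gauss (2 * τ) k := by
    rw [gauss_mul_gauss]; push_cast; ring_nf
  have odd (j k : ℤ) : gauss τ ↑(j + k + 1) * gauss τ ↑(j - k)
      = gauss (2 * τ) (j + 1 / 2) * gauss (2 * τ) (k + 1 / 2) := by
    rw [gauss_mul_gauss]; push_cast; ring_nf
  rw [theta3_eq_tsum_gauss, tsum_sq_eq_tsum_checkerboard (summable_norm_gauss_int hτ)]
  simp only [even, odd]
  rw [theta3_eq_tsum_gauss, theta2_eq_tsum_gauss, sq, sq, tsum_mul_tsum_of_summable_norm hθ₃ hθ₃,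
    tsum_mul_tsum_of_summable_norm hθ₂ hθ₂]

theorem theta4_sq (hτ : 0 < τ.im) :
    theta4 τ ^ 2 = theta3 (2 * τ) ^ 2 - theta2 (2 * τ) ^ 2 := by
  have h2τ : 0 < (2 * τ).im := by simpa using hτ
  have hθ₃ := summable_norm_gauss_int h2τ
  have hθ₂ := summable_norm_gauss_int_add (1 / 2) h2τ
  have hF : Summable fun n : ℤ => ‖(-1 : ℂ) ^ n * gauss τ n‖ := by
    simpa using summable_norm_gauss_int hτ
  have even (j k : ℤ) : (-1 : ℂ) ^ (j + k) * gauss τ ↑(j + k) * ((-1) ^ (j - k) * gauss τ ↑(j - k))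
      = gauss (2 * τ) j * gauss (2 * τ) k := by
    have hsign : (-1 : ℂ) ^ (j + k) * (-1) ^ (j - k) = 1 := by
      rw [← zpow_add₀ (by norm_num)]; exact Even.neg_one_zpow ⟨j, by ring⟩
    rw [mul_mul_mul_comm, hsign, one_mul, gauss_mul_gauss]; push_cast; ring_nf
  have odd (j k : ℤ) :
      (-1 : ℂ) ^ (j + k + 1) * gauss τ ↑(j + k + 1) * ((-1) ^ (j - k) * gauss τ ↑(j - k))
      = -(gauss (2 * τ) (j + 1 / 2) * gauss (2 * τ) (k + 1 / 2)) := by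
    have hsign : (-1 : ℂ) ^ (j + k + 1) * (-1) ^ (j - k) = -1 := by
      rw [← zpow_add₀ (by norm_num)]; exact Odd.neg_one_zpow ⟨j, by ring⟩
    rw [mul_mul_mul_comm, hsign, neg_one_mul, gauss_mul_gauss]; push_cast; ring_nf
  rw [theta4_eq_tsum_gauss, tsum_sq_eq_tsum_checkerboard hF]
  simp only [even, odd, tsum_neg]
  rw [theta3_eq_tsum_gauss, theta2_eq_tsum_gauss, sq, sq, tsum_mul_tsum_of_summable_norm hθ₃ hθ₃,
    tsum_mul_tsum_of_summable_norm hθ₂ hθ₂, sub_eq_add_neg]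

theorem theta2_sq (hτ : 0 < τ.im) :
    theta2 τ ^ 2 = 2 * theta2 (2 * τ) * theta3 (2 * τ) := by
  have h2τ : 0 < (2 * τ).im := by simpa using hτ
  have hθ₃ := summable_norm_gauss_int h2τ
  have hθ₂ := summable_norm_gauss_int_add (1 / 2) h2τ
  have hθ₃' : Summable fun n : ℤ => ‖gauss (2 * τ) ↑(n + 1)‖ :=
    hθ₃.comp_injective (add_left_injective 1)
  have even (j k : ℤ) : gauss τ (↑(j + k) + 1 / 2) * gauss τ (↑(j - k) + 1 / 2)
      = gauss (2 * τ) (j + 1 / 2) * gauss (2 * τ) k := by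
    rw [gauss_mul_gauss]; push_cast; ring_nf
  have odd (j k : ℤ) : gauss τ (↑(j + k + 1) + 1 / 2) * gauss τ (↑(j - k) + 1 / 2)
      = gauss (2 * τ) ↑(j + 1) * gauss (2 * τ) (k + 1 / 2) := by
    rw [gauss_mul_gauss]; push_cast; ring_nf
  have shift : ∑' n : ℤ, gauss (2 * τ) ↑(n + 1) = theta3 (2 * τ) :=
    (Equiv.addRight 1).tsum_eq fun n : ℤ => gauss (2 * τ) n
  rw [theta2_eq_tsum_gauss, tsum_sq_eq_tsum_checkerboard (summable_norm_gauss_int_add (1 / 2) hτ)]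
  simp only [even, odd]
  rw [← tsum_mul_tsum_of_summable_norm hθ₂ hθ₃, ← tsum_mul_tsum_of_summable_norm hθ₃' hθ₂, shift,
    theta2_eq_tsum_gauss, theta3_eq_tsum_gauss]
  ring

end Duplication

theorem jacobi_identity (τ : ℂ) (hτ : 0 < τ.im) :
    theta2 τ ^ 4 + theta4 τ ^ 4 = theta3 τ ^ 4 := by
  calc theta2 τ ^ 4 + theta4 τ ^ 4 = (theta2 τ ^ 2) ^ 2 + (theta4 τ ^ 2) ^ 2 := by ring
    _ = (theta3 τ ^ 2) ^ 2 := by rw [theta2_sq hτ, theta4_sq hτ, theta3_sq hτ]; ring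
    _ = theta3 τ ^ 4 := by ring
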